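/- Let μ be a signed measure on ℝ^d with compact support. Then μ is pseudo-positive if and only if the functional P ↦ ∫_{ℝ^d} P dμ on ℂ[x_1,…,x_d] is pseudo-positive definite. -/

import Mathlib

open MeasureTheory MvPolynomial Metric
open scoped ComplexOrder ENNReal

noncomputable section

/-- `d`-dimensional Euclidean space. -/
abbrev E (d : ℕ) := EuclideanSpace ℝ (Fin d)

/-- The (surface) measure `dθ` on the unit sphere `S^{d-1}`. -/
noncomputable def sphMeas (d : ℕ) : Measure (sphere (0 : E d) 1) :=
  (volume : Measure (E d)).toSphere

/-- A bundled orthonormal basis `Y_{k,l}`, `l = 1,…,a_k`, of the spaces `H_k(ℝ^d)` of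
real-valued harmonic polynomials homogeneous of degree `k`, orthonormal with respect to
`⟨f,g⟩ = ∫_{S^{d-1}} f g dθ`. -/
structure HarmonicBasis (d : ℕ) where
  a : ℕ → ℕ
  Y : (k : ℕ) → Fin (a k) → MvPolynomial (Fin d) ℝ
  harmonic : ∀ k l, (∑ i, pderiv i (pderiv i (Y k l))) = 0
  homogeneous : ∀ k l, (Y k l).IsHomogeneous k
  orthonormal : ∀ (k k' : ℕ) (l : Fin (a k)) (l' : Fin (a k')),
    (∫ θ : sphere (0 : E d) 1,
        (eval (fun i => (θ : E d) i) (Y k l)) * (eval (fun i => (θ : E d) i) (Y k' l'))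
      ∂(sphMeas d)) = if k = k' ∧ (l : ℕ) = (l' : ℕ) then 1 else 0
  complete : ∀ (k : ℕ) (P : MvPolynomial (Fin d) ℝ),
    (∑ i, pderiv i (pderiv i P)) = 0 → P.IsHomogeneous k →
      P ∈ Submodule.span ℝ (Set.range (Y k))

/-- Evaluation of a complex polynomial in `d` variables at a point of `ℝ^d`. -/
def evalC {d : ℕ} (P : MvPolynomial (Fin d) ℂ) (x : E d) : ℂ :=
  eval (fun i => (x i : ℂ)) P

/-- The polynomial `|x|² = x₁² + … + x_d²`. -/
def normSqP (d : ℕ) : MvPolynomial (Fin d) ℂ := ∑ i, X i ^ 2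

/-- Integral of a (complex- or real-valued) function with respect to a signed measure,
via the Jordan decomposition. -/
noncomputable def sInt {α : Type*} {G : Type*} [MeasurableSpace α] [NormedAddCommGroup G]
    [NormedSpace ℝ G] (μ : SignedMeasure α) (f : α → G) : G :=
  (∫ x, f x ∂μ.toJordanDecomposition.posPart) - ∫ x, f x ∂μ.toJordanDecomposition.negPart

/-- A signed measure is a moment measure if every polynomial is integrable with respect to
its total variation. -/
def IsMomentMeasure {d : ℕ} (μ : SignedMeasure (E d)) : Prop :=
  ∀ P : MvPolynomial (Fin d) ℂ, Integrable (evalC P) μ.totalVariation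

namespace HarmonicBasis

variable {d : ℕ} (B : HarmonicBasis d)

/-- `Y_{k,l}` as a function on `ℝ^d`. -/
def Yf (k : ℕ) (l : Fin (B.a k)) (x : E d) : ℝ := eval (fun i => x i) (B.Y k l)

/-- `Y_{k,l}` as a complex polynomial. -/
def YC (k : ℕ) (l : Fin (B.a k)) : MvPolynomial (Fin d) ℂ :=
  (B.Y k l).map (algebraMap ℝ ℂ)

/-- The Laplace–Fourier coefficient `f_{k,l}(r) = ∫_{S^{d-1}} f(rθ) Y_{k,l}(θ) dθ`. -/
noncomputable def lfCoeff (f : E d → ℂ) (k : ℕ) (l : Fin (B.a k)) (r : ℝ) : ℂ :=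
  ∫ θ : sphere (0 : E d) 1, f (r • (θ : E d)) * (B.Yf k l (θ : E d) : ℂ) ∂(sphMeas d)

/-- `GaussDecomp B f K p` : `p` is a Gauss (Laplace–Fourier) decomposition of the polynomial
`f`, i.e. `f(x) = ∑_{k=0}^{K} ∑_{l=1}^{a_k} p_{k,l}(|x|²) Y_{k,l}(x)` with `p_{k,l} = 0` for
`k > K`. -/
def GaussDecomp (f : MvPolynomial (Fin d) ℂ) (K : ℕ)
    (p : (k : ℕ) → Fin (B.a k) → Polynomial ℂ) : Prop :=
  (∀ k, K < k → ∀ l, p k l = 0) ∧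
    f = ∑ k ∈ Finset.range (K + 1), ∑ l,
      Polynomial.aeval (normSqP d) (p k l) * B.YC k l

/-- The component functional `T_{k,l}(p) = T(p(|x|²) Y_{k,l}(x))`. -/
def component (T : MvPolynomial (Fin d) ℂ → ℂ) (k : ℕ) (l : Fin (B.a k))
    (p : Polynomial ℂ) : ℂ :=
  T (Polynomial.aeval (normSqP d) p * B.YC k l)

/-- A functional `T` on `ℂ[x₁,…,x_d]` is pseudo-positive definite (w.r.t. the basis `Y_{k,l}`)
if `T_{k,l}(p* p) ≥ 0` and `T_{k,l}(t · p*(t) p(t)) ≥ 0` for all univariate `p` and all `k, l`. -/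
def PPD (T : MvPolynomial (Fin d) ℂ → ℂ) : Prop :=
  ∀ (k : ℕ) (l : Fin (B.a k)) (p : Polynomial ℂ),
    0 ≤ B.component T k l (p.map (starRingEnd ℂ) * p) ∧
    0 ≤ B.component T k l (Polynomial.X * (p.map (starRingEnd ℂ) * p))

/-- A signed measure `μ` on `ℝ^d` is pseudo-positive (w.r.t. the basis `Y_{k,l}`) if
`∫ h(|x|) Y_{k,l}(x) dμ ≥ 0` for every non-negative continuous compactly supported `h`. -/
def PseudoPositive (μ : SignedMeasure (E d)) : Prop :=
  ∀ (k : ℕ) (l : Fin (B.a k)) (h : ℝ → ℝ), Continuous h → HasCompactSupport h →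
    (∀ t, 0 ≤ h t) → 0 ≤ sInt μ (fun x => h ‖x‖ * B.Yf k l x)

/-- `ν` is the family of component measures `μ_{k,l}` of the signed measure `μ`, i.e.
`∫_0^∞ h dμ_{k,l} = ∫_{ℝ^d} h(|x|) Y_{k,l}(x) dμ` for all continuous compactly supported `h`. -/
def IsComponentFamily (μ : SignedMeasure (E d))
    (ν : (k : ℕ) → Fin (B.a k) → Measure ℝ) : Prop :=
  ∀ k l, (ν k l) (Set.Iio 0) = 0 ∧
    ∀ h : ℝ → ℝ, Continuous h → HasCompactSupport h →
      ∫ t, h t ∂(ν k l) = sInt μ (fun x => h ‖x‖ * B.Yf k l x)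

/-- The summability condition `C_N = ∑_{k,l} ∫_0^∞ r^N r^{-k} dσ_{k,l}(r) < ∞` for all `N`. -/
def SummCond (σ : (k : ℕ) → Fin (B.a k) → Measure ℝ) : Prop :=
  ∀ N : ℕ, (∑' k : ℕ, ∑ l, ∫⁻ r, (ENNReal.ofReal r) ^ N * ((ENNReal.ofReal r) ^ k)⁻¹
    ∂(σ k l)) < ⊤

end HarmonicBasis

/-- The set `W_τ^{Sti}` of all non-negative moment measures on `[0,∞)` having the same
moments as `τ`. -/
def WSti (τ : Measure ℝ) : Set (Measure ℝ) :=
  {ρ | ρ (Set.Iio 0) = 0 ∧ (∀ m : ℕ, Integrable (fun t => t ^ m) ρ) ∧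
    ∀ m : ℕ, ∫ t, t ^ m ∂ρ = ∫ t, t ^ m ∂τ}

/-- A measure `ν` on `[0,∞)` is determined in the sense of Stieltjes if it is the only
non-negative measure on `[0,∞)` with its moments. -/
def StieltjesDeterminate (ν : Measure ℝ) : Prop :=
  ∀ τ : Measure ℝ, τ ∈ WSti ν → τ = ν

/-! Since `|μ|` is carried by a ball of radius `R`, the integral `∫ h(|x|) Y_{k,l}(x) dμ` only sees
`h` on `[0, R]`. So for `F = |p|²` or `F = t |p|²`, both non-negative on `[0, ∞)`, the value
`T_{k,l}(F) = ∫ F(|x|²) Y_{k,l} dμ` equals the integral of the compactly supported `χ(t) F(t²)`,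
where `χ = 1` on `[0, R]`. Conversely, by Weierstrass `√(h(√s))` is uniformly close on `[0, R²]`
to real polynomials `r`, so on the support `h(|x|)` is a uniform limit of `r(|x|²)²`, and
`∫ r(|x|²)² Y_{k,l} dμ = T_{k,l}(r* r) ≥ 0`. -/

open Set Polynomial

section SignedIntegral

variable {α : Type*} [MeasurableSpace α] {μ : SignedMeasure α}

variable (μ) in
theorem posPart_le_totalVariation :
    μ.toJordanDecomposition.posPart ≤ μ.totalVariation :=
  Measure.le_add_right le_rfl

variable (μ) in
theorem negPart_le_totalVariation :
    μ.toJordanDecomposition.negPart ≤ μ.totalVariation :=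
  Measure.le_add_left le_rfl

theorem sInt_congr_ae {G : Type*} [NormedAddCommGroup G] [NormedSpace ℝ G] {f g : α → G}
    (h : f =ᵐ[μ.totalVariation] g) : sInt μ f = sInt μ g := by
  rw [sInt, sInt, integral_congr_ae (ae_mono (posPart_le_totalVariation μ) h),
    integral_congr_ae (ae_mono (negPart_le_totalVariation μ) h)]

theorem sInt_ofReal (f : α → ℝ) : sInt μ (fun x => (f x : ℂ)) = sInt μ f := by
  simp only [sInt, integral_complex_ofReal, Complex.ofReal_sub]

theorem sInt_sub {f g : α → ℝ} (hf : Integrable f μ.totalVariation)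
    (hg : Integrable g μ.totalVariation) :
    sInt μ (fun x => f x - g x) = sInt μ f - sInt μ g := by
  rw [sInt, sInt, sInt,
    integral_sub (hf.mono_measure (posPart_le_totalVariation μ))
      (hg.mono_measure (posPart_le_totalVariation μ)),
    integral_sub (hf.mono_measure (negPart_le_totalVariation μ))
      (hg.mono_measure (negPart_le_totalVariation μ))]
  ring

theorem abs_sInt_le {f : α → ℝ} (hf : Integrable f μ.totalVariation) :
    |sInt μ f| ≤ ∫ x, |f x| ∂μ.totalVariation := by
  rw [sInt, SignedMeasure.totalVariation,
    integral_add_measure (hf.mono_measure (posPart_le_totalVariation μ)).abs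
      (hf.mono_measure (negPart_le_totalVariation μ)).abs]
  exact (abs_sub _ _).trans (add_le_add abs_integral_le_integral_abs abs_integral_le_integral_abs)

theorem sInt_nonneg_of_forall_approx {f : α → ℝ} (hf : Integrable f μ.totalVariation)
    (happrox : ∀ ε > 0, ∃ g : α → ℝ, Integrable g μ.totalVariation ∧ 0 ≤ sInt μ g ∧
      ∫ x, |f x - g x| ∂μ.totalVariation ≤ ε) :
    0 ≤ sInt μ f := by
  refine le_of_forall_pos_le_add fun ε hε => ?_
  obtain ⟨g, hg, hg0, hfg⟩ := happrox ε hε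
  have hdiff := abs_sInt_le (f := fun x => f x - g x) (hf.sub hg)
  rw [sInt_sub hf hg] at hdiff
  linarith [neg_abs_le (sInt μ f - sInt μ g)]

end SignedIntegral

theorem exists_polynomial_sq_near_of_continuousOn (a b : ℝ) (G : ℝ → ℝ)
    (hG : ContinuousOn G (Icc a b)) (hG0 : ∀ s ∈ Icc a b, 0 ≤ G s) (ε : ℝ) (hε : 0 < ε) :
    ∃ r : ℝ[X], ∀ s ∈ Icc a b, |r.eval s ^ 2 - G s| < ε := by
  let g : C(Icc a b, ℝ) :=
    ⟨fun s => √(G s), Real.continuous_sqrt.comp (continuousOn_iff_continuous_domRestrict.mp hG)⟩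
  have hg : g ^ 2 ∈ closure ((· ^ 2) '' (polynomialFunctions (Icc a b) : Set C(Icc a b, ℝ))) :=
    mem_closure_image (continuous_pow 2).continuousAt
      (continuousMap_mem_polynomialFunctions_closure a b g)
  obtain ⟨_, ⟨_, ⟨r, -, rfl⟩, rfl⟩, hr⟩ := Metric.mem_closure_iff.mp hg ε hε
  refine ⟨r, fun s hs => ?_⟩
  have := (ContinuousMap.dist_apply_le_dist ⟨s, hs⟩).trans_lt hr
  rw [dist_comm, Real.dist_eq] at this
  simpa [g, Real.sq_sqrt (hG0 s hs)] using this

section BoundedSupport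

variable {V : Type*} [NormedAddCommGroup V] [MeasurableSpace V] {μ : SignedMeasure V} {R : ℝ}

theorem sInt_comp_normSq_mul_nonneg_of_hasCompactSupport
    (hμ : ∀ᵐ x ∂μ.totalVariation, ‖x‖ ≤ R) {w : V → ℝ}
    (hpos : ∀ h : ℝ → ℝ, Continuous h → HasCompactSupport h → (∀ t, 0 ≤ h t) →
      0 ≤ sInt μ (fun x => h ‖x‖ * w x))
    {F : ℝ → ℝ} (hF : Continuous F) (hF0 : ∀ s, 0 ≤ s → 0 ≤ F s) :
    0 ≤ sInt μ (fun x => F (‖x‖ ^ 2) * w x) := by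
  obtain ⟨χ, hχ1, -, hχc, hχ01⟩ := exists_continuous_one_zero_of_isCompact
    (isCompact_closedBall (0 : ℝ) R) isClosed_empty (disjoint_empty _)
  have hcut : (fun x => χ ‖x‖ * F (‖x‖ ^ 2) * w x) =ᵐ[μ.totalVariation]
      fun x => F (‖x‖ ^ 2) * w x := by
    filter_upwards [hμ] with x hx
    rw [hχ1 (by simpa using hx), Pi.one_apply, one_mul]
  rw [← sInt_congr_ae hcut]
  exact hpos (fun t => χ t * F (t ^ 2)) (χ.continuous.mul (hF.comp (continuous_pow 2)))
    hχc.mul_right (fun t => mul_nonneg (hχ01 t).1 (hF0 _ (sq_nonneg t)))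

variable [ProperSpace V] [BorelSpace V]

theorem integrable_of_ae_norm_le {F : Type*} [NormedAddCommGroup F] {ν : Measure V}
    [IsFiniteMeasure ν] (hν : ∀ᵐ x ∂ν, ‖x‖ ≤ R) {f : V → F} (hf : Continuous f) :
    Integrable f ν := by
  have hball : ∀ᵐ x ∂ν, x ∈ closedBall (0 : V) R := by simpa using hν
  rw [← Measure.restrict_eq_self_of_ae_mem hball]
  exact hf.continuousOn.integrableOn_compact (isCompact_closedBall 0 R)

theorem sInt_comp_norm_mul_nonneg_of_sq (hμ : ∀ᵐ x ∂μ.totalVariation, ‖x‖ ≤ R) {w : V → ℝ}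
    (hw : Continuous w) (hsq : ∀ r : ℝ[X], 0 ≤ sInt μ (fun x => r.eval (‖x‖ ^ 2) ^ 2 * w x))
    {h : ℝ → ℝ} (hh : Continuous h) (hh0 : ∀ t, 0 ≤ h t) :
    0 ≤ sInt μ (fun x => h ‖x‖ * w x) := by
  set C := ∫ x, |w x| ∂μ.totalVariation
  have hC : 0 ≤ C := integral_nonneg fun x => abs_nonneg _
  have hf : Integrable (fun x => h ‖x‖ * w x) μ.totalVariation :=
    integrable_of_ae_norm_le hμ ((hh.comp continuous_norm).mul hw)
  refine sInt_nonneg_of_forall_approx hf fun ε hε => ?_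
  obtain ⟨r, hr⟩ := exists_polynomial_sq_near_of_continuousOn 0 (R ^ 2) (fun s => h √s)
    (hh.comp Real.continuous_sqrt).continuousOn (fun s _ => hh0 _) (ε / (C + 1)) (by positivity)
  have hg : Integrable (fun x => r.eval (‖x‖ ^ 2) ^ 2 * w x) μ.totalVariation :=
    integrable_of_ae_norm_le hμ (by fun_prop)
  have hfg : Integrable (fun x => |h ‖x‖ * w x - r.eval (‖x‖ ^ 2) ^ 2 * w x|)
      μ.totalVariation := (hf.sub hg).abs
  refine ⟨_, hg, hsq r, ?_⟩
  have hpt : ∀ᵐ x ∂μ.totalVariation,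
      |h ‖x‖ * w x - r.eval (‖x‖ ^ 2) ^ 2 * w x| ≤ ε / (C + 1) * |w x| := by
    filter_upwards [hμ] with x hx
    have hmem : ‖x‖ ^ 2 ∈ Icc 0 (R ^ 2) := ⟨sq_nonneg _, pow_le_pow_left₀ (norm_nonneg x) hx 2⟩
    have := hr _ hmem
    rw [Real.sqrt_sq (norm_nonneg x)] at this
    rw [← sub_mul, abs_mul, abs_sub_comm]
    exact mul_le_mul_of_nonneg_right this.le (abs_nonneg _)
  calc ∫ x, |h ‖x‖ * w x - r.eval (‖x‖ ^ 2) ^ 2 * w x| ∂μ.totalVariation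
      ≤ ∫ x, ε / (C + 1) * |w x| ∂μ.totalVariation :=
        integral_mono_ae hfg
          ((integrable_of_ae_norm_le hμ hw.abs).const_mul _) hpt
    _ = ε / (C + 1) * C := integral_const_mul _ _
    _ ≤ ε := by
        rw [div_mul_eq_mul_div, div_le_iff₀ (by positivity)]
        nlinarith

end BoundedSupport

variable {d : ℕ}

theorem evalC_mul (P Q : MvPolynomial (Fin d) ℂ) (x : E d) :
    evalC (P * Q) x = evalC P x * evalC Q x :=
  map_mul _ P Q

theorem evalC_aeval_normSqP (q : ℂ[X]) (x : E d) :
    evalC (aeval (normSqP d) q) x = q.eval ((‖x‖ ^ 2 : ℝ) : ℂ) := by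
  change MvPolynomial.aeval (fun i => (x i : ℂ)) _ = _
  rw [← Polynomial.aeval_algHom_apply, Polynomial.coe_aeval_eq_eval]
  simp [normSqP, EuclideanSpace.norm_sq_eq]

theorem eval_map_conj_mul_self (p : ℂ[X]) (s : ℝ) :
    (p.map (starRingEnd ℂ) * p).eval (s : ℂ) = Complex.normSq (p.eval (s : ℂ)) := by
  rw [Polynomial.eval_mul, Polynomial.eval_map, ← Complex.conj_ofReal, eval₂_at_apply,
    Complex.conj_ofReal, Complex.normSq_eq_conj_mul_self]

theorem eval_map_algebraMap_ofReal (r : ℝ[X]) (s : ℝ) :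
    (r.map (algebraMap ℝ ℂ)).eval (s : ℂ) = r.eval s := by
  rw [eval_map_algebraMap, ← Complex.coe_algebraMap, aeval_algebraMap_apply_eq_algebraMap_eval]

namespace HarmonicBasis

variable (B : HarmonicBasis d)

theorem continuous_Yf (k : ℕ) (l : Fin (B.a k)) : Continuous (B.Yf k l) :=
  (MvPolynomial.continuous_eval _).comp (PiLp.continuous_ofLp _ _)

theorem evalC_YC (k : ℕ) (l : Fin (B.a k)) (x : E d) : evalC (B.YC k l) x = B.Yf k l x := by
  rw [evalC, YC, Yf, MvPolynomial.eval_map]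
  exact (MvPolynomial.eval₂_comp (algebraMap ℝ ℂ) _ _).symm

theorem component_sInt_evalC (μ : SignedMeasure (E d)) (k : ℕ) (l : Fin (B.a k)) {q : ℂ[X]}
    {F : ℝ → ℝ} (hqF : ∀ s : ℝ, q.eval (s : ℂ) = F s) :
    B.component (fun P => sInt μ (evalC P)) k l q = sInt μ (fun x => F (‖x‖ ^ 2) * B.Yf k l x) := by
  rw [component, ← sInt_ofReal]
  congr 1
  funext x
  rw [evalC_mul, evalC_aeval_normSqP, evalC_YC, hqF, Complex.ofReal_mul]

end HarmonicBasis

theorem statement7_general {d : ℕ} (B : HarmonicBasis d) (μ : SignedMeasure (E d))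
    (hcs : ∃ K : Set (E d), IsCompact K ∧ μ.totalVariation Kᶜ = 0) :
    B.PseudoPositive μ ↔ B.PPD (fun P => sInt μ (evalC P)) := by
  obtain ⟨K, hK, hμK⟩ := hcs
  obtain ⟨R, hKR⟩ := hK.isBounded.subset_closedBall 0
  have hR : ∀ᵐ x ∂μ.totalVariation, ‖x‖ ≤ R := by
    filter_upwards [measure_eq_zero_iff_ae_notMem.mp hμK] with x hx
    simpa using hKR (not_not.mp hx)
  constructor
  · intro hpp k l p
    have hnonneg (F : ℝ → ℝ) (hF : Continuous F) (hF0 : ∀ s, 0 ≤ s → 0 ≤ F s) :=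
      Complex.zero_le_real.2 (sInt_comp_normSq_mul_nonneg_of_hasCompactSupport hR (hpp k l) hF hF0)
    rw [B.component_sInt_evalC μ k l (eval_map_conj_mul_self p),
      B.component_sInt_evalC μ k l (F := fun s => s * Complex.normSq (p.eval (s : ℂ)))
        fun s => by
          rw [Polynomial.eval_mul, Polynomial.eval_X, eval_map_conj_mul_self, Complex.ofReal_mul]]
    exact ⟨hnonneg (fun s => Complex.normSq (p.eval (s : ℂ))) (by fun_prop)
        fun s _ => Complex.normSq_nonneg _,
      hnonneg (fun s => s * Complex.normSq (p.eval (s : ℂ))) (by fun_prop)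
        fun s hs => mul_nonneg hs (Complex.normSq_nonneg _)⟩
  · intro hppd k l h hh _ hh0
    refine sInt_comp_norm_mul_nonneg_of_sq hR (B.continuous_Yf k l) (fun r => ?_) hh hh0
    have := (hppd k l (r.map (algebraMap ℝ ℂ))).1
    rwa [B.component_sInt_evalC μ k l (F := fun s => r.eval s ^ 2)
      fun s => by rw [eval_map_conj_mul_self, eval_map_algebraMap_ofReal, Complex.normSq_ofReal, sq,
        Complex.ofReal_mul],
      Complex.zero_le_real] at this

theorem statement7 {d : ℕ} (hd : 1 ≤ d) (B : HarmonicBasis d) (μ : SignedMeasure (E d))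
    (hcs : ∃ K : Set (E d), IsCompact K ∧ μ.totalVariation Kᶜ = 0) :
    B.PseudoPositive μ ↔ B.PPD (fun P => sInt μ (evalC P)) :=
  statement7_general B μ hcs
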